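/- arXiv:2009.07212 — 2 statements merged into one kernel-verified Lean document; each statement's English description precedes it below -/
import Mathlib

section
/- Let X be a compact metric space and Γ : C(X) → ℝ a pressure function. Then there exists a residual (comeagre) subset ℜ of C(X) such that for every φ ∈ ℜ the set ℰ_φ(Γ) of equilibrium states of φ is a singleton. -/
open MeasureTheory

/-- A pressure function on `C(X,ℝ)`: monotone, translation invariant and convex. -/
def IsPressureFunction {X : Type*} [TopologicalSpace X] [CompactSpace X]
    (Γ : C(X, ℝ) → ℝ) : Prop :=
  (∀ φ ψ : C(X, ℝ), (∀ x, φ x ≤ ψ x) → Γ φ ≤ Γ ψ) ∧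
  (∀ (φ : C(X, ℝ)) (c : ℝ), Γ (φ + ContinuousMap.const X c) = Γ φ + c) ∧
  ConvexOn ℝ Set.univ Γ

/-- The entropy-like map `𝔥(μ) = inf { ∫ φ dμ : φ ∈ C(X), Γ(−φ) ≤ 0 }`, valued in `EReal`
(so that the value `−∞` is allowed). -/
noncomputable def entropyLike {X : Type*} [TopologicalSpace X] [CompactSpace X]
    [MeasurableSpace X] (Γ : C(X, ℝ) → ℝ) (μ : ProbabilityMeasure X) : EReal :=
  sInf { r : EReal | ∃ φ : C(X, ℝ), Γ (-φ) ≤ 0 ∧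
    r = ((∫ x, φ x ∂(μ : Measure X) : ℝ) : EReal) }

/-!
A pressure function `Γ` is convex and `1`-Lipschitz on the separable Banach space `C(X)`, so
(Mazur) it is Gateaux differentiable on a residual set. Concretely, the right derivative
`v ↦ D⁺Γ(φ)(v)` is sublinear, and for each direction `v` and each `ε > 0` the set of `φ` with
`D⁺Γ(φ)(v) + D⁺Γ(φ)(-v) < ε` is open and dense. Intersecting over a dense sequence of
directions and `ε = 1/(m+1)` gives a residual set on which `D⁺Γ(φ)` is odd, hence linear.

Equilibrium states of `φ` are exactly the probability measures `μ` with
`∫ ψ dμ - ∫ φ dμ ≤ Γ ψ - Γ φ` for all `ψ`, i.e. the subgradients of `Γ` at `φ`, and where `Γ` is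
Gateaux differentiable the derivative is its only subgradient. That derivative is positive and
maps `1` to `1`, so by Riesz–Markov–Kakutani it is integration against exactly one probability
measure.
-/

open Filter Set Topology

section RightLineDeriv

variable {E : Type*} [AddCommGroup E] [Module ℝ E] {f : E → ℝ} {x v w : E} {t c : ℝ}

noncomputable def rightLineDeriv (f : E → ℝ) (x v : E) : ℝ :=
  derivWithin (fun t : ℝ => f (x + t • v)) (Ioi 0) 0

@[simp]
theorem rightLineDeriv_zero : rightLineDeriv f x 0 = 0 := by
  simp [rightLineDeriv]

theorem ConvexOn.comp_line (hf : ConvexOn ℝ univ f) (x v : E) :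
    ConvexOn ℝ univ (fun t : ℝ => f (x + t • v)) :=
  (hf.translate_right x).comp_linearMap (LinearMap.toSpanSingleton ℝ E v)

variable (hf : ConvexOn ℝ univ f)
include hf

theorem ConvexOn.tendsto_rightLineDeriv :
    Tendsto (fun t : ℝ => (f (x + t • v) - f x) / t) (𝓝[>] 0) (𝓝 (rightLineDeriv f x v)) := by
  unfold rightLineDeriv
  have h := (hf.comp_line x v).hasDerivWithinAt_rightDeriv_of_mem_interior (x := 0) (by simp)
  rw [hasDerivWithinAt_iff_tendsto_slope' self_notMem_Ioi] at h
  convert h using 1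
  ext t
  simp [slope_def_field]

theorem ConvexOn.rightLineDeriv_le (ht : 0 < t) :
    rightLineDeriv f x v ≤ (f (x + t • v) - f x) / t := by
  have h := (hf.comp_line x v).rightDeriv_le_slope_of_mem_interior (x := 0) (by simp)
    (mem_univ t) ht
  simpa [slope_def_field, rightLineDeriv] using h

theorem ConvexOn.rightLineDeriv_le_sub : rightLineDeriv f x v ≤ f (x + v) - f x := by
  simpa using hf.rightLineDeriv_le (x := x) (v := v) one_pos

theorem ConvexOn.rightLineDeriv_add_le :
    rightLineDeriv f x (v + w) ≤ rightLineDeriv f x v + rightLineDeriv f x w := by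
  refine ge_of_tendsto (hf.tendsto_rightLineDeriv.add hf.tendsto_rightLineDeriv) ?_
  filter_upwards [self_mem_nhdsWithin] with t (ht : 0 < t)
  have hmid : x + (t / 2) • (v + w) = (1 / 2 : ℝ) • (x + t • v) + (1 / 2 : ℝ) • (x + t • w) :=
    by module
  have hconv := hf.2 (mem_univ (x + t • v)) (mem_univ (x + t • w))
    (by norm_num : (0 : ℝ) ≤ 1 / 2) (by norm_num : (0 : ℝ) ≤ 1 / 2) (by norm_num)
  rw [← hmid, smul_eq_mul, smul_eq_mul] at hconv
  calc rightLineDeriv f x (v + w) ≤ (f (x + (t / 2) • (v + w)) - f x) / (t / 2) :=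
        hf.rightLineDeriv_le (half_pos ht)
    _ ≤ (f (x + t • v) - f x) / t + (f (x + t • w) - f x) / t := by
        rw [← add_div, div_le_div_iff₀ (half_pos ht) ht]
        nlinarith

theorem ConvexOn.rightLineDeriv_smul_le (hc : 0 < c) :
    rightLineDeriv f x (c • v) ≤ c * rightLineDeriv f x v := by
  refine ge_of_tendsto (hf.tendsto_rightLineDeriv.const_mul c) ?_
  filter_upwards [self_mem_nhdsWithin] with t (ht : 0 < t)
  calc rightLineDeriv f x (c • v) ≤ (f (x + (t / c) • c • v) - f x) / (t / c) :=
        hf.rightLineDeriv_le (div_pos ht hc)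
    _ = c * ((f (x + t • v) - f x) / t) := by
        rw [smul_smul, div_mul_cancel₀ t hc.ne']
        field_simp

theorem ConvexOn.rightLineDeriv_smul (hc : 0 < c) :
    rightLineDeriv f x (c • v) = c * rightLineDeriv f x v := by
  refine le_antisymm (hf.rightLineDeriv_smul_le hc) ?_
  have h := hf.rightLineDeriv_smul_le (x := x) (v := c • v) (inv_pos.2 hc)
  rw [inv_smul_smul₀ hc.ne'] at h
  exact (le_inv_mul_iff₀ hc).1 h

theorem ConvexOn.rightLineDeriv_add_neg_nonneg :
    0 ≤ rightLineDeriv f x v + rightLineDeriv f x (-v) := by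
  simpa using hf.rightLineDeriv_add_le (x := x) (v := v) (w := -v)

theorem ConvexOn.le_rightLineDeriv_of_subgradient (ℓ : E →ₗ[ℝ] ℝ)
    (hℓ : ∀ y, ℓ y - ℓ x ≤ f y - f x) (v : E) : ℓ v ≤ rightLineDeriv f x v := by
  refine ge_of_tendsto hf.tendsto_rightLineDeriv ?_
  filter_upwards [self_mem_nhdsWithin] with t (ht : 0 < t)
  rw [le_div_iff₀ ht]
  simpa [mul_comm] using hℓ (x + t • v)

end RightLineDeriv

section Linear

variable {E : Type*} [AddCommGroup E] [Module ℝ E] {f : E → ℝ} {x v w : E}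
  (hf : ConvexOn ℝ univ f) (hodd : ∀ v, rightLineDeriv f x (-v) = -rightLineDeriv f x v)
include hf hodd

theorem ConvexOn.rightLineDeriv_add_of_odd :
    rightLineDeriv f x (v + w) = rightLineDeriv f x v + rightLineDeriv f x w := by
  refine le_antisymm hf.rightLineDeriv_add_le ?_
  have h := hf.rightLineDeriv_add_le (x := x) (v := -v) (w := -w)
  rw [← neg_add, hodd, hodd, hodd] at h
  linarith

theorem ConvexOn.rightLineDeriv_smul_of_odd (c : ℝ) :
    rightLineDeriv f x (c • v) = c * rightLineDeriv f x v := by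
  rcases lt_trichotomy c 0 with hc | rfl | hc
  · rw [← neg_neg c, neg_smul, hodd, hf.rightLineDeriv_smul (neg_pos.2 hc)]
    ring
  · simp
  · exact hf.rightLineDeriv_smul hc

noncomputable def ConvexOn.rightLineDerivLinearMap : E →ₗ[ℝ] ℝ where
  toFun := rightLineDeriv f x
  map_add' _ _ := hf.rightLineDeriv_add_of_odd hodd
  map_smul' c _ := hf.rightLineDeriv_smul_of_odd hodd c

theorem ConvexOn.subgradient_iff_eq_rightLineDeriv (ℓ : E →ₗ[ℝ] ℝ) :
    (∀ y, ℓ y - ℓ x ≤ f y - f x) ↔ ∀ v, ℓ v = rightLineDeriv f x v := by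
  constructor
  · intro hℓ v
    have h := hf.le_rightLineDeriv_of_subgradient ℓ hℓ (-v)
    rw [map_neg, hodd] at h
    exact le_antisymm (hf.le_rightLineDeriv_of_subgradient ℓ hℓ v) (by linarith)
  · intro hℓ y
    have h := hf.rightLineDeriv_add_of_odd hodd (v := x) (w := y - x)
    rw [add_sub_cancel] at h
    rw [hℓ, hℓ, h, add_sub_cancel_left]
    simpa using hf.rightLineDeriv_le_sub (x := x) (v := y - x)

end Linear

section Generic

open scoped NNReal

variable {E : Type*} [NormedAddCommGroup E] [NormedSpace ℝ E] {f : E → ℝ} {K : ℝ≥0}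

theorem LipschitzWith.exists_secondDiff_lt {g : ℝ → ℝ} (hg : LipschitzWith K g) {η ε : ℝ}
    (hη : 0 < η) (hε : 0 < ε) :
    ∃ s ∈ Ioo 0 η, ∃ t > 0, g (s + t) + g (s - t) - 2 * g s < ε * t := by
  -- Otherwise the increments of `g` over a grid of mesh `δ` in `(0, η)` grow by `εδ` per step,
  -- while they are bounded by `Kδ` in absolute value.
  by_contra! h
  obtain ⟨N, hN⟩ := exists_nat_gt (2 * K / ε)
  set δ := η / (N + 1)
  have hδ : 0 < δ := by positivity
  set D : ℕ → ℝ := fun i => g ((i + 1) * δ) - g (i * δ)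
  have hstep : ∀ i < N, ε * δ ≤ D (i + 1) - D i := by
    intro i hi
    have hiN : ((i : ℝ) + 1) * δ < η := by
      have : (i : ℝ) + 1 < N + 1 := by exact_mod_cast Nat.add_lt_add_right hi 1
      calc ((i : ℝ) + 1) * δ < (N + 1) * δ := by gcongr
        _ = η := mul_div_cancel₀ η (by positivity)
    have h' := h _ ⟨by positivity, hiN⟩ δ hδ
    rw [show ((i : ℝ) + 1) * δ + δ = ((i : ℝ) + 1 + 1) * δ by ring,
      show ((i : ℝ) + 1) * δ - δ = i * δ by ring] at h'
    simp only [D]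
    push_cast
    linarith
  have hbound : ∀ i, |D i| ≤ K * δ := fun i => by
    simpa [Real.dist_eq, D, add_mul, abs_of_pos hδ] using hg.dist_le_mul ((i + 1) * δ) (i * δ)
  have htel : N * (ε * δ) ≤ D N - D 0 := by
    rw [← Finset.sum_range_sub]
    simpa using Finset.sum_le_sum fun i hi => hstep i (Finset.mem_range.1 hi)
  have hbN := abs_le.1 (hbound N)
  have hb0 := abs_le.1 (hbound 0)
  have : N * ε ≤ 2 * K := by nlinarith
  rw [div_lt_iff₀ hε] at hN
  linarith

theorem ConvexOn.lipschitzWith_rightLineDeriv (hf : ConvexOn ℝ univ f) (hL : LipschitzWith K f)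
    (x : E) : LipschitzWith K (rightLineDeriv f x) := by
  refine LipschitzWith.of_le_add_mul K fun v w => ?_
  have hK := hL.dist_le_mul (x + (v - w)) x
  rw [Real.dist_eq, dist_eq_norm (x + (v - w)), add_sub_cancel_left, ← dist_eq_norm] at hK
  calc rightLineDeriv f x v = rightLineDeriv f x (w + (v - w)) := by rw [add_sub_cancel]
    _ ≤ rightLineDeriv f x w + rightLineDeriv f x (v - w) := hf.rightLineDeriv_add_le
    _ ≤ rightLineDeriv f x w + (f (x + (v - w)) - f x) := by
        gcongr
        exact hf.rightLineDeriv_le_sub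
    _ ≤ rightLineDeriv f x w + K * dist v w := by
        gcongr
        exact (le_abs_self _).trans hK

variable (hf : ConvexOn ℝ univ f)
include hf

theorem ConvexOn.isOpen_setOf_rightLineDeriv_add_neg_lt (hc : Continuous f) (v : E) (ε : ℝ) :
    IsOpen {x | rightLineDeriv f x v + rightLineDeriv f x (-v) < ε} := by
  refine isOpen_iff_mem_nhds.2 fun x hx => ?_
  obtain ⟨t, hlt, ht⟩ := (((hf.tendsto_rightLineDeriv (x := x) (v := v)).add
    hf.tendsto_rightLineDeriv).eventually (gt_mem_nhds hx)).and self_mem_nhdsWithin |>.exists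
  have hopen : IsOpen {y | (f (y + t • v) - f y) / t + (f (y + t • -v) - f y) / t < ε} :=
    isOpen_lt (by fun_prop) continuous_const
  filter_upwards [hopen.mem_nhds hlt] with y hy
  exact (add_le_add (hf.rightLineDeriv_le ht) (hf.rightLineDeriv_le ht)).trans_lt hy

theorem ConvexOn.dense_setOf_rightLineDeriv_add_neg_lt (hL : LipschitzWith K f) (v : E)
    {ε : ℝ} (hε : 0 < ε) : Dense {x | rightLineDeriv f x v + rightLineDeriv f x (-v) < ε} := by
  refine Metric.dense_iff.2 fun x₀ r hr => ?_
  have hg : LipschitzWith (K * ‖v‖₊) (fun s : ℝ => f (x₀ + s • v)) := by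
    refine LipschitzWith.of_dist_le_mul fun a b => ?_
    calc dist (f (x₀ + a • v)) (f (x₀ + b • v)) ≤ K * dist (x₀ + a • v) (x₀ + b • v) :=
          hL.dist_le_mul _ _
      _ = K * ‖v‖₊ * dist a b := by
          rw [dist_add_left, dist_eq_norm, ← sub_smul, norm_smul, Real.dist_eq, Real.norm_eq_abs]
          push_cast
          ring
  obtain ⟨s, ⟨hs0, hsη⟩, t, ht, hlt⟩ :=
    hg.exists_secondDiff_lt (η := r / (‖v‖ + 1)) (by positivity) hε
  refine ⟨x₀ + s • v, ?_, ?_⟩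
  · rw [Metric.mem_ball, dist_self_add_left, norm_smul, Real.norm_of_nonneg hs0.le]
    calc s * ‖v‖ ≤ r / (‖v‖ + 1) * ‖v‖ := by gcongr
      _ < r := by
          rw [div_mul_eq_mul_div, div_lt_iff₀ (by positivity)]
          nlinarith
  · have hsum := add_le_add (hf.rightLineDeriv_le (x := x₀ + s • v) (v := v) ht)
      (hf.rightLineDeriv_le (x := x₀ + s • v) (v := -v) ht)
    have hplus : x₀ + s • v + t • v = x₀ + (s + t) • v := by module
    have hminus : x₀ + s • v + t • -v = x₀ + (s - t) • v := by module
    rw [hplus, hminus, ← add_div] at hsum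
    refine hsum.trans_lt ((div_lt_iff₀ ht).2 ?_)
    linarith

theorem ConvexOn.eventually_residual_rightLineDeriv_neg [CompleteSpace E]
    [TopologicalSpace.SeparableSpace E] (hL : LipschitzWith K f) :
    ∀ᶠ x in residual E, ∀ v, rightLineDeriv f x (-v) = -rightLineDeriv f x v := by
  obtain ⟨u, hu⟩ := TopologicalSpace.exists_dense_seq E
  have hsmall : ∀ᶠ x in residual E, ∀ n m : ℕ,
      rightLineDeriv f x (u n) + rightLineDeriv f x (-u n) < 1 / (m + 1) := by
    simp only [eventually_countable_forall]
    exact fun n m => residual_of_dense_open (hf.isOpen_setOf_rightLineDeriv_add_neg_lt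
      hL.continuous _ _) (hf.dense_setOf_rightLineDeriv_add_neg_lt hL _ (by positivity))
  filter_upwards [hsmall] with x hx v
  have hcont := (hf.lipschitzWith_rightLineDeriv hL x).continuous
  have hclosed : IsClosed {w | rightLineDeriv f x w + rightLineDeriv f x (-w) ≤ 0} :=
    isClosed_le (hcont.add (hcont.comp continuous_neg)) continuous_const
  have hseq : ∀ n, rightLineDeriv f x (u n) + rightLineDeriv f x (-u n) ≤ 0 := by
    intro n
    by_contra! hpos
    obtain ⟨m, hm⟩ := exists_nat_one_div_lt hpos
    exact (hx n m).not_gt hm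
  have hv : rightLineDeriv f x v + rightLineDeriv f x (-v) ≤ 0 :=
    hclosed.closure_subset_iff.2 (range_subset_iff.2 hseq) (hu v)
  linarith [hf.rightLineDeriv_add_neg_nonneg (x := x) (v := v)]

end Generic

section Pressure

variable {X : Type*} [TopologicalSpace X] [CompactSpace X] {Γ : C(X, ℝ) → ℝ}

theorem IsPressureFunction.lipschitzWith_one (hΓ : IsPressureFunction Γ) :
    LipschitzWith 1 Γ := by
  refine LipschitzWith.of_le_add fun φ ψ => ?_
  rw [dist_eq_norm, ← hΓ.2.1]
  refine hΓ.1 _ _ fun x => ?_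
  have h := (φ - ψ).norm_coe_le_norm x
  rw [Real.norm_eq_abs, ContinuousMap.sub_apply] at h
  simp only [ContinuousMap.add_apply, ContinuousMap.const_apply]
  linarith [le_abs_self (φ x - ψ x)]

theorem IsPressureFunction.rightLineDeriv_const (hΓ : IsPressureFunction Γ) (φ : C(X, ℝ))
    (c : ℝ) : rightLineDeriv Γ φ (ContinuousMap.const X c) = c := by
  have hline : (fun t : ℝ => Γ (φ + t • ContinuousMap.const X c)) = fun t => Γ φ + t * c := by
    funext t
    rw [← hΓ.2.1]
    congr 1
  rw [rightLineDeriv, hline]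
  exact ((hasDerivAt_mul_const c).const_add (Γ φ)).hasDerivWithinAt.derivWithin
    (uniqueDiffWithinAt_Ioi 0)

theorem IsPressureFunction.rightLineDeriv_nonneg (hΓ : IsPressureFunction Γ) {φ v : C(X, ℝ)}
    (hv : 0 ≤ v) : 0 ≤ rightLineDeriv Γ φ v := by
  refine ge_of_tendsto hΓ.2.2.tendsto_rightLineDeriv ?_
  filter_upwards [self_mem_nhdsWithin] with t (ht : 0 < t)
  refine div_nonneg (sub_nonneg.2 (hΓ.1 _ _ fun x => ?_)) ht.le
  simpa using mul_nonneg ht.le (hv x)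

end Pressure

section Measure

open scoped CompactlySupported

variable {X : Type*} [TopologicalSpace X] [MeasurableSpace X]

theorem MeasureTheory.ProbabilityMeasure.ext_of_forall_integral_continuousMap_eq
    [HasOuterApproxClosed X] [BorelSpace X] {μ ν : ProbabilityMeasure X}
    (h : ∀ f : C(X, ℝ), ∫ x, f x ∂(μ : Measure X) = ∫ x, f x ∂(ν : Measure X)) : μ = ν :=
  ProbabilityMeasure.toMeasure_injective <|
    ext_of_forall_integral_eq_of_IsFiniteMeasure fun f => h f.toContinuousMap

variable [CompactSpace X]

@[simps]
noncomputable def ContinuousMap.integralLinearMap [OpensMeasurableSpace X] (μ : Measure X)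
    [IsFiniteMeasure μ] : C(X, ℝ) →ₗ[ℝ] ℝ where
  toFun f := ∫ x, f x ∂μ
  map_add' f g := integral_add
    (f.continuous.integrable_of_hasCompactSupport (.of_compactSpace _))
    (g.continuous.integrable_of_hasCompactSupport (.of_compactSpace _))
  map_smul' c _ := integral_const_mul c _

theorem ContinuousMap.integral_const_sub [OpensMeasurableSpace X] (μ : Measure X)
    [IsProbabilityMeasure μ] (φ : C(X, ℝ)) (c : ℝ) :
    ∫ x, (ContinuousMap.const X c - φ) x ∂μ = c - ∫ x, φ x ∂μ := by
  simpa using (ContinuousMap.integralLinearMap μ).map_sub (ContinuousMap.const X c) φ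

theorem exists_probabilityMeasure_integral_eq [T2Space X] [BorelSpace X] (L : C(X, ℝ) →ₗ[ℝ] ℝ)
    (hpos : ∀ f, 0 ≤ f → 0 ≤ L f) (hone : L 1 = 1) :
    ∃ μ : ProbabilityMeasure X, ∀ f : C(X, ℝ), ∫ x, f x ∂(μ : Measure X) = L f := by
  let Λ : C_c(X, ℝ) →ₚ[ℝ] ℝ := PositiveLinearMap.mk₀
    { toFun f := L f.toContinuousMap
      map_add' _ _ := L.map_add _ _
      map_smul' c _ := L.map_smul c _ }
    fun f hf => hpos _ fun x => hf x
  have hint (f : C(X, ℝ)) : ∫ x, f x ∂(RealRMK.rieszMeasure Λ) = L f :=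
    RealRMK.integral_rieszMeasure Λ (CompactlySupportedContinuousMap.continuousMapEquiv f)
  have hprob : IsProbabilityMeasure (RealRMK.rieszMeasure Λ) :=
    isProbabilityMeasure_iff_real.2 (by simpa [hone] using hint 1)
  exact ⟨⟨_, hprob⟩, hint⟩

end Measure

theorem map_sub_const_of_map_add_const {X : Type*} [TopologicalSpace X] {Γ : C(X, ℝ) → ℝ}
    (hΓ : ∀ (φ : C(X, ℝ)) (c : ℝ), Γ (φ + ContinuousMap.const X c) = Γ φ + c)
    (ψ : C(X, ℝ)) (c : ℝ) : Γ (ψ - ContinuousMap.const X c) = Γ ψ - c := by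
  rw [show ψ - ContinuousMap.const X c = ψ + ContinuousMap.const X (-c) by
    ext; simp [sub_eq_add_neg], hΓ, sub_eq_add_neg]

section Equilibrium

variable {X : Type*} [TopologicalSpace X] [CompactSpace X] [MeasurableSpace X]
  [OpensMeasurableSpace X] {Γ : C(X, ℝ) → ℝ} {μ : ProbabilityMeasure X}

variable (hΓ : ∀ (φ : C(X, ℝ)) (c : ℝ), Γ (φ + ContinuousMap.const X c) = Γ φ + c)
include hΓ

theorem entropyLike_le_sub_integral (φ : C(X, ℝ)) :
    entropyLike Γ μ ≤ ((Γ φ - ∫ x, φ x ∂(μ : Measure X) : ℝ) : EReal) :=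
  sInf_le ⟨ContinuousMap.const X (Γ φ) - φ,
    by rw [neg_sub, map_sub_const_of_map_add_const hΓ, sub_self],
    by rw [ContinuousMap.integral_const_sub]⟩

theorem coe_le_entropyLike_iff (r : ℝ) :
    (r : EReal) ≤ entropyLike Γ μ ↔ ∀ ψ : C(X, ℝ), ∫ x, ψ x ∂(μ : Measure X) - Γ ψ ≤ -r := by
  rw [entropyLike, le_sInf_iff]
  constructor
  · intro h ψ
    have hψ := h _ ⟨ContinuousMap.const X (Γ ψ) - ψ,
      by rw [neg_sub, map_sub_const_of_map_add_const hΓ, sub_self], rfl⟩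
    rw [ContinuousMap.integral_const_sub, EReal.coe_le_coe_iff] at hψ
    linarith
  · rintro h _ ⟨g, hg, rfl⟩
    have hg' := h (-g)
    simp only [ContinuousMap.neg_apply, integral_neg] at hg'
    exact EReal.coe_le_coe_iff.2 (by linarith)

theorem entropyLike_add_integral_eq_iff (φ : C(X, ℝ)) :
    entropyLike Γ μ + (∫ x, φ x ∂(μ : Measure X) : ℝ) = Γ φ ↔
      ∀ ψ : C(X, ℝ), ∫ x, ψ x ∂(μ : Measure X) - ∫ x, φ x ∂(μ : Measure X) ≤ Γ ψ - Γ φ := by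
  constructor
  · intro h ψ
    have hE : entropyLike Γ μ = ((Γ φ - ∫ x, φ x ∂(μ : Measure X) : ℝ) : EReal) := by
      rw [EReal.coe_sub, ← h, EReal.add_sub_cancel_right]
    have := (coe_le_entropyLike_iff hΓ _).1 hE.ge ψ
    linarith
  · intro h
    have hE : entropyLike Γ μ = ((Γ φ - ∫ x, φ x ∂(μ : Measure X) : ℝ) : EReal) :=
      le_antisymm (entropyLike_le_sub_integral hΓ φ)
        ((coe_le_entropyLike_iff hΓ _).2 fun ψ => by linarith [h ψ])
    rw [hE, ← EReal.coe_add, sub_add_cancel]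

end Equilibrium

theorem generic_unique_equilibrium_general {X : Type*} [MetricSpace X] [CompactSpace X]
    [MeasurableSpace X] [BorelSpace X]
    (Γ : C(X, ℝ) → ℝ) (hΓ : IsPressureFunction Γ) :
    ∃ R : Set C(X, ℝ), R ∈ residual C(X, ℝ) ∧
      ∀ φ ∈ R, ∃! μ : ProbabilityMeasure X,
        entropyLike Γ μ + ((∫ x, φ x ∂(μ : Measure X) : ℝ) : EReal) = (Γ φ : EReal) := by
  have hconv : ConvexOn ℝ univ Γ := hΓ.2.2
  refine ⟨{φ | ∀ v, rightLineDeriv Γ φ (-v) = -rightLineDeriv Γ φ v},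
    hconv.eventually_residual_rightLineDeriv_neg hΓ.lipschitzWith_one, fun φ hφ => ?_⟩
  have hequilibrium (ν : ProbabilityMeasure X) :
      entropyLike Γ ν + ((∫ x, φ x ∂(ν : Measure X) : ℝ) : EReal) = (Γ φ : EReal) ↔
        ∀ v, ∫ x, v x ∂(ν : Measure X) = rightLineDeriv Γ φ v := by
    rw [entropyLike_add_integral_eq_iff hΓ.2.1]
    exact hconv.subgradient_iff_eq_rightLineDeriv hφ (ContinuousMap.integralLinearMap _)
  obtain ⟨μ, hμ⟩ := exists_probabilityMeasure_integral_eq (hconv.rightLineDerivLinearMap hφ)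
    (fun _ hv => hΓ.rightLineDeriv_nonneg hv) (hΓ.rightLineDeriv_const φ 1)
  exact ⟨μ, (hequilibrium μ).2 hμ, fun ν hν =>
    ProbabilityMeasure.ext_of_forall_integral_continuousMap_eq fun f =>
      ((hequilibrium ν).1 hν f).trans (hμ f).symm⟩

/-- There is a residual (comeagre) subset `ℜ ⊆ C(X)` such that every
`φ ∈ ℜ` has a unique equilibrium state. -/
theorem generic_unique_equilibrium {X : Type*} [MetricSpace X] [CompactSpace X]
    [Nonempty X] [MeasurableSpace X] [BorelSpace X]
    (Γ : C(X, ℝ) → ℝ) (hΓ : IsPressureFunction Γ) :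
    ∃ R : Set C(X, ℝ), R ∈ residual C(X, ℝ) ∧
      ∀ φ ∈ R, ∃! μ : ProbabilityMeasure X,
        entropyLike Γ μ + ((∫ x, φ x ∂(μ : Measure X) : ℝ) : EReal) = (Γ φ : EReal) :=
  generic_unique_equilibrium_general Γ hΓ
end

section
/- Let X be a compact metric space, Γ : C(X) → ℝ a pressure function, and φ ∈ C(X). Suppose Γ is Fréchet differentiable at φ with derivative μ_φ ∈ 𝒫(X). If (μ_n) is a sequence in 𝒫(X) such that 𝔥(μ_n) + ∫ φ dμ_n → Γ(φ) as n → ∞, then ‖μ_n − μ_φ‖ → 0 in the total variation norm. -/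
open MeasureTheory Filter Topology

/-- Total variation distance between two Borel probability measures, expressed via
integrals of continuous functions of sup norm at most one. -/
noncomputable def tvDist {X : Type*} [TopologicalSpace X] [CompactSpace X]
    [MeasurableSpace X] (μ ν : ProbabilityMeasure X) : ℝ :=
  sSup { r : ℝ | ∃ ψ : C(X, ℝ), ‖ψ‖ ≤ 1 ∧
    r = |∫ x, ψ x ∂(μ : Measure X) - ∫ x, ψ x ∂(ν : Measure X)| }

/-! Testing the variational inequality `𝔥(μ) + ∫ ξ dμ ≤ Γ(ξ)` at `ξ = φ + tψ` shows that a measure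
`μ` with `𝔥(μ) + ∫ φ dμ ≥ Γ(φ) - δ` satisfies `t ∫ ψ dμ ≤ Γ(φ + tψ) - Γ(φ) + δ`. Fréchet
differentiability makes the right-hand side `t ∫ ψ dμ_φ + o(t)` uniformly in `‖ψ‖∞ ≤ 1`, so choosing
`t` small and then `δ` small compared with `t` bounds `|∫ ψ dμ - ∫ ψ dμ_φ|` uniformly. -/

lemma exists_pos_forall_abs_smul_le {E : Type*} [NormedAddCommGroup E] [NormedSpace ℝ E]
    {R : E → ℝ} (hR : Tendsto (fun h => |R h| / ‖h‖) (𝓝[≠] 0) (𝓝 0)) (hR0 : R 0 = 0)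
    {ε : ℝ} (hε : 0 < ε) : ∃ t > 0, ∀ h : E, ‖h‖ ≤ 1 → |R (t • h)| ≤ ε * t := by
  have hsmall : ∀ᶠ h in 𝓝 (0 : E), |R h| ≤ ε * ‖h‖ := by
    have := eventually_nhdsWithin_iff.1 (hR.eventually_lt_const hε)
    filter_upwards [this] with h hh
    rcases eq_or_ne h 0 with rfl | h0
    · simp [hR0]
    · exact ((div_lt_iff₀ (norm_pos_iff.2 h0)).1 (hh h0)).le
  obtain ⟨r, hr, hball⟩ := Metric.eventually_nhds_iff.1 hsmall
  refine ⟨r / 2, by positivity, fun h hh => ?_⟩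
  have hnorm : ‖(r / 2) • h‖ ≤ r / 2 := by
    rw [norm_smul, Real.norm_of_nonneg (by positivity)]
    exact mul_le_of_le_one_right (by positivity) hh
  calc |R ((r / 2) • h)| ≤ ε * ‖(r / 2) • h‖ := hball (by rw [dist_zero_right]; linarith)
    _ ≤ ε * (r / 2) := by gcongr

section

variable {X : Type*} [TopologicalSpace X] [CompactSpace X] [MeasurableSpace X]

lemma tvDist_nonneg (μ ν : ProbabilityMeasure X) : 0 ≤ tvDist μ ν :=
  Real.sSup_nonneg (by rintro _ ⟨ψ, -, rfl⟩; exact abs_nonneg _)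

lemma tvDist_le_of_forall_integral_sub_le {μ ν : ProbabilityMeasure X} {c : ℝ}
    (h : ∀ ψ : C(X, ℝ), ‖ψ‖ ≤ 1 →
      ∫ x, ψ x ∂(μ : Measure X) - ∫ x, ψ x ∂(ν : Measure X) ≤ c) :
    tvDist μ ν ≤ c := by
  have habs : ∀ ψ : C(X, ℝ), ‖ψ‖ ≤ 1 →
      |∫ x, ψ x ∂(μ : Measure X) - ∫ x, ψ x ∂(ν : Measure X)| ≤ c := by
    intro ψ hψ
    have hneg := h (-ψ) (by rwa [norm_neg])
    simp only [ContinuousMap.neg_apply, integral_neg] at hneg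
    exact abs_le.2 ⟨by linarith, h ψ hψ⟩
  exact Real.sSup_le (by rintro _ ⟨ψ, hψ, rfl⟩; exact habs ψ hψ)
    ((abs_nonneg _).trans (habs 0 (by simp)))

variable [OpensMeasurableSpace X]

lemma ContinuousMap.integrable_of_compactSpace (g : C(X, ℝ)) (μ : Measure X)
    [IsFiniteMeasure μ] : Integrable g μ :=
  g.continuous.integrable_of_hasCompactSupport (HasCompactSupport.of_compactSpace _)

lemma integral_continuousMap_add (μ : Measure X) [IsFiniteMeasure μ] (f g : C(X, ℝ)) :
    ∫ x, (f + g) x ∂μ = ∫ x, f x ∂μ + ∫ x, g x ∂μ :=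
  integral_add (f.integrable_of_compactSpace _) (g.integrable_of_compactSpace _)

lemma entropyLike_add_integral_le {Γ : C(X, ℝ) → ℝ}
    (hΓ : ∀ (φ : C(X, ℝ)) (c : ℝ), Γ (φ + ContinuousMap.const X c) = Γ φ + c)
    (μ : ProbabilityMeasure X) (ξ : C(X, ℝ)) :
    entropyLike Γ μ + ((∫ x, ξ x ∂(μ : Measure X) : ℝ) : EReal) ≤ ((Γ ξ : ℝ) : EReal) := by
  have hadmissible : Γ (-(ContinuousMap.const X (Γ ξ) - ξ)) ≤ 0 := by
    rw [show -(ContinuousMap.const X (Γ ξ) - ξ) = ξ + ContinuousMap.const X (-Γ ξ) by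
      ext; simp [sub_eq_add_neg, add_comm], hΓ, add_neg_cancel]
  have hintegral : ∫ x, (ContinuousMap.const X (Γ ξ) - ξ) x ∂(μ : Measure X)
      = Γ ξ - ∫ x, ξ x ∂(μ : Measure X) := by
    simp only [ContinuousMap.sub_apply, ContinuousMap.const_apply]
    rw [integral_sub (integrable_const _) (ξ.integrable_of_compactSpace _), integral_const]
    simp
  have hle : entropyLike Γ μ ≤ ((Γ ξ - ∫ x, ξ x ∂(μ : Measure X) : ℝ) : EReal) :=
    sInf_le ⟨_, hadmissible, by rw [hintegral]⟩
  calc entropyLike Γ μ + ((∫ x, ξ x ∂(μ : Measure X) : ℝ) : EReal)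
      ≤ ((Γ ξ - ∫ x, ξ x ∂(μ : Measure X) : ℝ) : EReal)
          + ((∫ x, ξ x ∂(μ : Measure X) : ℝ) : EReal) := by gcongr
    _ = ((Γ ξ : ℝ) : EReal) := by rw [← EReal.coe_add, sub_add_cancel]

lemma add_integral_le_of_le_entropyLike_add {Γ : C(X, ℝ) → ℝ}
    (hΓ : ∀ (φ : C(X, ℝ)) (c : ℝ), Γ (φ + ContinuousMap.const X c) = Γ φ + c)
    {μ : ProbabilityMeasure X} {φ : C(X, ℝ)} {a : ℝ}
    (ha : (a : EReal) ≤ entropyLike Γ μ + ((∫ x, φ x ∂(μ : Measure X) : ℝ) : EReal))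
    (ψ : C(X, ℝ)) : a + ∫ x, ψ x ∂(μ : Measure X) ≤ Γ (φ + ψ) := by
  have h := entropyLike_add_integral_le hΓ μ (φ + ψ)
  rw [integral_continuousMap_add, EReal.coe_add, ← add_assoc] at h
  exact EReal.coe_le_coe_iff.1 (le_trans (by rw [EReal.coe_add]; gcongr) h)

lemma integral_sub_integral_le_of_le_entropyLike_add {Γ : C(X, ℝ) → ℝ}
    (hΓ : ∀ (φ : C(X, ℝ)) (c : ℝ), Γ (φ + ContinuousMap.const X c) = Γ φ + c)
    {μ ν : ProbabilityMeasure X} {φ ψ : C(X, ℝ)} {a t ε : ℝ}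
    (ha : (a : EReal) ≤ entropyLike Γ μ + ((∫ x, φ x ∂(μ : Measure X) : ℝ) : EReal))
    (ht : 0 < t)
    (hderiv : Γ (φ + t • ψ) - Γ φ - ∫ x, (t • ψ) x ∂(ν : Measure X) ≤ ε * t) :
    ∫ x, ψ x ∂(μ : Measure X) - ∫ x, ψ x ∂(ν : Measure X) ≤ (Γ φ - a) / t + ε := by
  have hlower := add_integral_le_of_le_entropyLike_add hΓ ha (t • ψ)
  simp only [ContinuousMap.smul_apply, smul_eq_mul, integral_const_mul] at hlower hderiv
  rw [div_add' _ _ _ ht.ne', le_div_iff₀ ht]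
  linarith

end

theorem maximizing_sequences_converge_general {X : Type*} [MetricSpace X] [CompactSpace X]
    [MeasurableSpace X] [BorelSpace X]
    (Γ : C(X, ℝ) → ℝ) (hΓ : IsPressureFunction Γ) (φ : C(X, ℝ))
    (μφ : ProbabilityMeasure X)
    (hF : Tendsto (fun ψ : C(X, ℝ) =>
        |Γ (φ + ψ) - Γ φ - ∫ x, ψ x ∂(μφ : Measure X)| / ‖ψ‖)
      (𝓝[≠] (0 : C(X, ℝ))) (𝓝 0))
    (μs : ℕ → ProbabilityMeasure X)
    (hμs : Tendsto (fun n : ℕ =>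
        entropyLike Γ (μs n) + ((∫ x, φ x ∂(μs n : Measure X) : ℝ) : EReal))
      atTop (𝓝 ((Γ φ : ℝ) : EReal))) :
    Tendsto (fun n : ℕ => tvDist (μs n) μφ) atTop (𝓝 0) := by
  rw [Metric.tendsto_atTop]
  intro ε hε
  obtain ⟨t, ht, hderiv⟩ := exists_pos_forall_abs_smul_le hF (by simp) (by positivity : 0 < ε / 3)
  have hnear : ((Γ φ - t * (ε / 3) : ℝ) : EReal) < ((Γ φ : ℝ) : EReal) :=
    EReal.coe_lt_coe_iff.2 (sub_lt_self _ (by positivity))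
  obtain ⟨N, hN⟩ := eventually_atTop.1 (hμs.eventually_const_lt hnear)
  refine ⟨N, fun n hn => ?_⟩
  have hbound : tvDist (μs n) μφ ≤ 2 * ε / 3 := by
    refine tvDist_le_of_forall_integral_sub_le fun ψ hψ => ?_
    have h := integral_sub_integral_le_of_le_entropyLike_add hΓ.2.1 (hN n hn).le ht
      (abs_le.1 (hderiv ψ hψ)).2
    rw [sub_sub_cancel, mul_div_cancel_left₀ _ ht.ne'] at h
    linarith
  rw [Real.dist_0_eq_abs, abs_of_nonneg (tvDist_nonneg _ _)]
  linarith

/-- If `Γ` is Fréchet differentiable at `φ` with derivative `μ_φ`, and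
`(μ_n)` is a sequence of probability measures with `𝔥(μ_n) + ∫ φ dμ_n → Γ(φ)`, then
`μ_n → μ_φ` in total variation. -/
theorem maximizing_sequences_converge {X : Type*} [MetricSpace X] [CompactSpace X]
    [MeasurableSpace X] [BorelSpace X]
    (Γ : C(X, ℝ) → ℝ) (hΓ : IsPressureFunction Γ) (φ : C(X, ℝ))
    (μφ : ProbabilityMeasure X)
    (hF : Tendsto (fun ψ : C(X, ℝ) =>
        |Γ (φ + ψ) - Γ φ - ∫ x, ψ x ∂(μφ : Measure X)| / ‖ψ‖)
      (𝓝[≠] (0 : C(X, ℝ))) (𝓝 0))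
    (huniq : ∀ ν : ProbabilityMeasure X,
      Tendsto (fun ψ : C(X, ℝ) =>
          |Γ (φ + ψ) - Γ φ - ∫ x, ψ x ∂(ν : Measure X)| / ‖ψ‖)
        (𝓝[≠] (0 : C(X, ℝ))) (𝓝 0) → ν = μφ)
    (μs : ℕ → ProbabilityMeasure X)
    (hμs : Tendsto (fun n : ℕ =>
        entropyLike Γ (μs n) + ((∫ x, φ x ∂(μs n : Measure X) : ℝ) : EReal))
      atTop (𝓝 ((Γ φ : ℝ) : EReal))) :
    Tendsto (fun n : ℕ => tvDist (μs n) μφ) atTop (𝓝 0) :=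
  maximizing_sequences_converge_general Γ hΓ φ μφ hF μs hμs
end
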